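/- arXiv:1906.06584 — 3 statements merged into one kernel-verified Lean document; each statement's English description precedes it below -/
import Mathlib

section
/- Let α ∈ (0,1) and ω_j = (-1)^j binomial(α, j). For any sequence u_0, u_1, ..., u_N in a real inner product space, with the discrete fractional derivative defined by D_n = τ^{-α} Σ_{j=1}^n ω_{n-j}(u_j - u_0), the sum Σ_{n=1}^N ⟨D_n, u_n - u_{n-1}⟩ is nonnegative. -/
/-- Grünwald-Letnikov weights: ω_j = (-1)^j α(α-1)⋯(α-j+1)/j!. -/
noncomputable def glWeight (α : ℝ) (j : ℕ) : ℝ :=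
  (-1) ^ j * (∏ i ∈ Finset.range j, (α - i)) / (Nat.factorial j)

/-!
Write `w k = u k - u (k - 1)`. Summing by parts, the sum equals
`τ ^ (-α) * ∑ₙ ∑_{k ≤ n} G (n - k) * ⟪w k, w n⟫`, where `G m = ∑_{i ≤ m} ω i` satisfies
`G (m + 1) = (1 - α / (m + 1)) * G m`, so it is nonnegative, nonincreasing and convex.
Doubling the triangular sum gives the symmetric Toeplitz form of `G |n - k|` plus a nonnegative
diagonal. By Pólya's argument, on `0, …, M` a convex nonincreasing nonnegative sequence is a
nonnegative combination of a constant and the tents `(L - m)⁺`, and the tent kernel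
`(L - |n - k|)⁺` is a Gram kernel: it counts the common points of the windows `[n, n + L)` and
`[k, k + L)`.
-/

open Finset
open scoped RealInnerProductSpace

section GrunwaldLetnikov

variable (α : ℝ)

noncomputable def glPartialSum (m : ℕ) : ℝ := ∑ i ∈ range (m + 1), glWeight α i

lemma glWeight_succ (m : ℕ) : glWeight α (m + 1) = (m - α) / (m + 1) * glWeight α m := by
  rw [glWeight, glWeight, prod_range_succ, pow_succ, Nat.factorial_succ]
  push_cast
  field_simp
  ring

lemma glPartialSum_succ_eq_add (m : ℕ) :
    glPartialSum α (m + 1) = glPartialSum α m + glWeight α (m + 1) :=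
  sum_range_succ _ _

lemma glWeight_succ_eq_mul_glPartialSum (m : ℕ) :
    glWeight α (m + 1) = -(α / (m + 1)) * glPartialSum α m := by
  induction m with
  | zero => simp [glWeight, glPartialSum]
  | succ m ih =>
    rw [glWeight_succ, ih, glPartialSum_succ_eq_add, ih]
    push_cast
    field_simp
    ring

lemma glPartialSum_succ (m : ℕ) :
    glPartialSum α (m + 1) = (1 - α / (m + 1)) * glPartialSum α m := by
  rw [glPartialSum_succ_eq_add, glWeight_succ_eq_mul_glPartialSum]
  ring

variable {α}

lemma glPartialSum_nonneg (hα : α ≤ 1) (m : ℕ) : 0 ≤ glPartialSum α m := by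
  induction m with
  | zero => simp [glPartialSum, glWeight]
  | succ m ih =>
    rw [glPartialSum_succ]
    have hle : α / (m + 1) ≤ 1 :=
      div_le_one_of_le₀ (by linarith [m.cast_nonneg (α := ℝ)]) (by positivity)
    exact mul_nonneg (by linarith) ih

lemma glPartialSum_sub_succ (m : ℕ) :
    glPartialSum α m - glPartialSum α (m + 1) = α / (m + 1) * glPartialSum α m := by
  rw [glPartialSum_succ]
  ring

lemma glPartialSum_antitone (hα₀ : 0 ≤ α) (hα₁ : α ≤ 1) : Antitone (glPartialSum α) :=
  antitone_nat_of_succ_le fun m => by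
    have hdiff : 0 ≤ α / (m + 1) * glPartialSum α m :=
      mul_nonneg (by positivity) (glPartialSum_nonneg hα₁ m)
    linarith [glPartialSum_sub_succ (α := α) m]

lemma glPartialSum_sub_succ_le (hα₀ : 0 ≤ α) (hα₁ : α ≤ 1) (m : ℕ) :
    glPartialSum α (m + 1) - glPartialSum α (m + 2) ≤
      glPartialSum α m - glPartialSum α (m + 1) := by
  rw [glPartialSum_sub_succ, glPartialSum_sub_succ]
  have hmono := glPartialSum_antitone hα₀ hα₁ m.le_succ
  have hnonneg := glPartialSum_nonneg hα₁ (m + 1)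
  push_cast
  gcongr ?_ * ?_
  gcongr
  linarith

end GrunwaldLetnikov

lemma sum_Icc_one_sub_pred {M : Type*} [AddCommGroup M] (u : ℕ → M) (n : ℕ) :
    ∑ k ∈ Icc 1 n, (u k - u (k - 1)) = u n - u 0 := by
  induction n with
  | zero => simp
  | succ n ih => rw [sum_Icc_succ_top (by omega), ih, Nat.add_sub_cancel]; abel

lemma sum_Icc_sub_eq_sum_range {R : Type*} [AddCommMonoid R] (ω : ℕ → R) {k n : ℕ} (hkn : k ≤ n) :
    ∑ j ∈ Icc k n, ω (n - j) = ∑ i ∈ range (n - k + 1), ω i := by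
  refine sum_nbij' (fun j => n - j) (fun i => n - i) ?_ ?_ ?_ ?_ fun _ _ => rfl <;>
    intro a ha <;> simp only [mem_Icc, mem_range] at ha ⊢ <;> omega

lemma sum_Icc_smul_sub_zero_eq {R M : Type*} [Semiring R] [AddCommGroup M] [Module R M] (ω : ℕ → R)
    (u : ℕ → M) (n : ℕ) :
    ∑ j ∈ Icc 1 n, ω (n - j) • (u j - u 0) =
      ∑ k ∈ Icc 1 n, (∑ i ∈ range (n - k + 1), ω i) • (u k - u (k - 1)) := by
  simp_rw [← sum_Icc_one_sub_pred u, smul_sum]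
  rw [sum_comm' (t' := Icc 1 n) (s' := fun k => Icc k n) (by intros; simp only [mem_Icc]; omega)]
  refine sum_congr rfl fun k hk => ?_
  rw [← sum_smul, sum_Icc_sub_eq_sum_range ω (mem_Icc.1 hk).2]

lemma sum_Icc_sum_Icc_add_sum_diag {M : Type*} [AddCommMonoid M] {K : ℕ → ℕ → M}
    (hK : ∀ n k, K n k = K k n) (b c : ℕ) :
    ∑ n ∈ Icc b c, ∑ k ∈ Icc b c, K n k + ∑ n ∈ Icc b c, K n n =
      2 • ∑ n ∈ Icc b c, ∑ k ∈ Icc b n, K n k := by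
  have hrow : ∀ n ∈ Icc b c, ∑ k ∈ Icc b c, K n k + K n n =
      ∑ k ∈ Icc b n, K n k + ∑ k ∈ Icc n c, K n k := by
    intro n hn
    rw [mem_Icc] at hn
    rw [← sum_union_inter,
      show Icc b n ∪ Icc n c = Icc b c by ext; simp only [mem_union, mem_Icc]; omega,
      show Icc b n ∩ Icc n c = {n} by ext; simp only [mem_inter, mem_Icc, mem_singleton]; omega,
      sum_singleton]
  have hcol : ∑ n ∈ Icc b c, ∑ k ∈ Icc n c, K n k = ∑ n ∈ Icc b c, ∑ k ∈ Icc b n, K n k := by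
    rw [sum_comm' (t' := Icc b c) (s' := fun k => Icc b k) (by intros; simp only [mem_Icc]; omega)]
    exact sum_congr rfl fun n _ => sum_congr rfl fun k _ => hK k n
  rw [← sum_add_distrib, sum_congr rfl hrow, sum_add_distrib, hcol, two_nsmul]

section KernelForm

variable {ι τ E : Type*} [NormedAddCommGroup E] [InnerProductSpace ℝ E]

noncomputable def kernelForm (s : Finset ι) (w : ι → E) : (ι → ι → ℝ) →ₗ[ℝ] ℝ where
  toFun K := ∑ n ∈ s, ∑ k ∈ s, K n k * ⟪w n, w k⟫
  map_add' K K' := by simp only [Pi.add_apply, add_mul, sum_add_distrib]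
  map_smul' c K := by simp only [Pi.smul_apply, smul_eq_mul, mul_assoc, ← mul_sum, RingHom.id_apply]

variable (s : Finset ι) (w : ι → E)

lemma kernelForm_apply (K : ι → ι → ℝ) :
    kernelForm s w K = ∑ n ∈ s, ∑ k ∈ s, K n k * ⟪w n, w k⟫ := rfl

lemma kernelForm_congr {K K' : ι → ι → ℝ} (h : ∀ n ∈ s, ∀ k ∈ s, K n k = K' n k) :
    kernelForm s w K = kernelForm s w K' :=
  sum_congr rfl fun n hn => sum_congr rfl fun k hk => by rw [h n hn k hk]

lemma kernelForm_one : kernelForm s w 1 = ‖∑ n ∈ s, w n‖ ^ 2 := by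
  simp_rw [kernelForm_apply, ← real_inner_self_eq_norm_sq, sum_inner, inner_sum, Pi.one_apply,
    one_mul]

lemma kernelForm_gram (T : Finset τ) (f : ι → τ → ℝ) :
    kernelForm s w (fun n k => ∑ t ∈ T, f n t * f k t) = ∑ t ∈ T, ‖∑ n ∈ s, f n t • w n‖ ^ 2 := by
  simp_rw [kernelForm_apply, ← real_inner_self_eq_norm_sq, sum_inner, inner_sum,
    real_inner_smul_left, real_inner_smul_right, sum_mul]
  calc _ = ∑ n ∈ s, ∑ t ∈ T, ∑ k ∈ s, f n t * f k t * ⟪w n, w k⟫ :=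
        sum_congr rfl fun _ _ => sum_comm
    _ = _ := by simp only [mul_assoc]; exact sum_comm

lemma kernelForm_card_inter_nonneg [DecidableEq τ] (A : ι → Finset τ) :
    0 ≤ kernelForm s w (fun n k => (#(A n ∩ A k) : ℝ)) := by
  let f : ι → τ → ℝ := fun n t => if t ∈ A n then 1 else 0
  have hcard : ∀ n ∈ s, ∀ k ∈ s, (#(A n ∩ A k) : ℝ) = ∑ t ∈ s.biUnion A, f n t * f k t := by
    intro n hn k _
    simp only [f, ite_zero_mul_ite_zero, mul_one, ← mem_inter, sum_boole, filter_mem_eq_inter,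
      inter_eq_right.mpr ((inter_subset_left).trans (subset_biUnion_of_mem A hn))]
  rw [kernelForm_congr s w hcard, kernelForm_gram]
  positivity

end KernelForm

section Toeplitz

variable {E : Type*} [NormedAddCommGroup E] [InnerProductSpace ℝ E]

-- Truncated subtraction in `ℕ` makes this the positive part `(L - |n - k|)⁺`.
def tentKernel (L n k : ℕ) : ℝ := (L - Nat.dist n k : ℕ)

lemma tentKernel_eq_card (L n k : ℕ) :
    tentKernel L n k = #(Ico n (n + L) ∩ Ico k (k + L)) := by
  rw [tentKernel, Ico_inter_Ico, Nat.card_Ico, Nat.dist]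
  congr 1
  omega

lemma kernelForm_tentKernel_nonneg (s : Finset ℕ) (w : ℕ → E) (L : ℕ) :
    0 ≤ kernelForm s w (tentKernel L) := by
  simp_rw [funext₂ (tentKernel_eq_card L)]
  exact kernelForm_card_inter_nonneg s w _

lemma eq_add_sum_mul_tsub (a : ℕ → ℝ) {m M : ℕ} (hm : m ≤ M) :
    a m = a M + (a M - a (M + 1)) * (M - m : ℕ) +
      ∑ p ∈ range M, ((a p - a (p + 1)) - (a (p + 1) - a (p + 2))) * (p + 1 - m : ℕ) := by
  induction M with
  | zero => simp_all
  | succ M ih =>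
    rcases hm.lt_or_eq with hm | rfl
    · rw [ih (by omega), sum_range_succ, Nat.sub_add_comm (by omega)]
      push_cast
      ring
    · rw [sum_eq_zero fun p hp => by rw [mem_range] at hp; simp [show p + 1 - (M + 1) = 0 by omega]]
      simp

lemma kernelForm_toeplitz_nonneg {a : ℕ → ℝ} (ha : ∀ m, 0 ≤ a m) (ha' : Antitone a)
    (ha'' : ∀ m, a (m + 1) - a (m + 2) ≤ a m - a (m + 1)) (s : Finset ℕ) (w : ℕ → E) :
    0 ≤ kernelForm s w (fun n k => a (Nat.dist n k)) := by
  set M := s.sup id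
  have hdecomp : ∀ n ∈ s, ∀ k ∈ s, a (Nat.dist n k) =
      (a M • 1 + (a M - a (M + 1)) • tentKernel M +
        ∑ p ∈ range M, ((a p - a (p + 1)) - (a (p + 1) - a (p + 2))) • tentKernel (p + 1)) n k := by
    intro n hn k hk
    have hn' : n ≤ M := le_sup (f := id) hn
    have hk' : k ≤ M := le_sup (f := id) hk
    simp only [Pi.add_apply, Pi.smul_apply, Finset.sum_apply, Pi.one_apply, smul_eq_mul, mul_one,
      tentKernel]
    exact eq_add_sum_mul_tsub a (show Nat.dist n k ≤ M by unfold Nat.dist; omega)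
  rw [kernelForm_congr s w hdecomp]
  simp only [map_add, map_smul, map_sum, smul_eq_mul, kernelForm_one]
  have hδ : ∀ m, 0 ≤ a m - a (m + 1) := fun m => sub_nonneg.2 (ha' m.le_succ)
  refine add_nonneg (add_nonneg ?_ ?_) (sum_nonneg fun p _ => ?_)
  · exact mul_nonneg (ha M) (sq_nonneg _)
  · exact mul_nonneg (hδ M) (kernelForm_tentKernel_nonneg s w M)
  · exact mul_nonneg (sub_nonneg.2 (ha'' p)) (kernelForm_tentKernel_nonneg s w (p + 1))

lemma sum_Icc_sum_Icc_mul_inner_nonneg {a : ℕ → ℝ} (ha : ∀ m, 0 ≤ a m) (ha' : Antitone a)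
    (ha'' : ∀ m, a (m + 1) - a (m + 2) ≤ a m - a (m + 1)) (b c : ℕ) (w : ℕ → E) :
    0 ≤ ∑ n ∈ Icc b c, ∑ k ∈ Icc b n, a (n - k) * ⟪w k, w n⟫ := by
  have hsymm := sum_Icc_sum_Icc_add_sum_diag (K := fun n k => a (Nat.dist n k) * ⟪w n, w k⟫)
    (fun n k => by rw [Nat.dist_comm, real_inner_comm]) b c
  have htri : ∑ n ∈ Icc b c, ∑ k ∈ Icc b n, a (Nat.dist n k) * ⟪w n, w k⟫ =
      ∑ n ∈ Icc b c, ∑ k ∈ Icc b n, a (n - k) * ⟪w k, w n⟫ :=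
    sum_congr rfl fun n _ => sum_congr rfl fun k hk => by
      rw [Nat.dist_eq_sub_of_le_right (mem_Icc.1 hk).2, real_inner_comm]
  have hdiag : 0 ≤ ∑ n ∈ Icc b c, a (Nat.dist n n) * ⟪w n, w n⟫ :=
    sum_nonneg fun n _ => mul_nonneg (ha _) real_inner_self_nonneg
  have hfull := kernelForm_toeplitz_nonneg ha ha' ha'' (Icc b c) w
  rw [kernelForm_apply] at hfull
  rw [two_nsmul, htri] at hsymm
  linarith

end Toeplitz

theorem discrete_positivity {H : Type*} [NormedAddCommGroup H] [InnerProductSpace ℝ H]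
    (α : ℝ) (hα : α ∈ Set.Ioo (0 : ℝ) 1) (τ : ℝ) (hτ : 0 < τ)
    (N : ℕ) (u : ℕ → H) :
    0 ≤ ∑ n ∈ Finset.Icc 1 N,
      (inner (𝕜 := ℝ)
        (τ ^ (-α) • ∑ j ∈ Finset.Icc 1 n, glWeight α (n - j) • (u j - u 0))
        (u n - u (n - 1)) : ℝ) := by
  obtain ⟨hα₀, hα₁⟩ := hα
  have hterm : ∀ n, ⟪τ ^ (-α) • ∑ j ∈ Icc 1 n, glWeight α (n - j) • (u j - u 0), u n - u (n - 1)⟫ =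
      τ ^ (-α) * ∑ k ∈ Icc 1 n, glPartialSum α (n - k) * ⟪u k - u (k - 1), u n - u (n - 1)⟫ :=
    fun n => by
      simp_rw [sum_Icc_smul_sub_zero_eq, real_inner_smul_left, sum_inner, real_inner_smul_left]
      rfl
  simp_rw [hterm, ← mul_sum]
  exact mul_nonneg (Real.rpow_nonneg hτ.le _) <|
    sum_Icc_sum_Icc_mul_inner_nonneg (glPartialSum_nonneg hα₁.le)
      (glPartialSum_antitone hα₀.le hα₁.le) (glPartialSum_sub_succ_le hα₀.le hα₁.le) 1 N _
end

section
/- Let H be a real inner product space, α ∈ (0,1), and (ω_j) the Grünwald-Letnikov weights of order α. For any u : {0,...,N} → H, the pointwise inequality ⟨∂̄_τ^α u_n, u_n⟩ ≥ (1/2) ∂̄_τ^α (‖u_n‖²) holds, where ∂̄_τ^α v_n = τ^{-α} Σ_{j=1}^n ω_{n-j}(v_j - v_0) for scalar or vector sequences. -/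
lemma glWeight_sign_prod (α : ℝ) (k : ℕ) :
    (-1 : ℝ) ^ k * (∏ i ∈ Finset.range k, (α - i)) =
      ∏ i ∈ Finset.range k, ((i : ℝ) - α) := by
  calc (-1 : ℝ) ^ k * ∏ i ∈ Finset.range k, (α - i)
      = (∏ _i ∈ Finset.range k, (-1 : ℝ)) * ∏ i ∈ Finset.range k, (α - i) := by
        rw [Finset.prod_const, Finset.card_range]
    _ = ∏ i ∈ Finset.range k, (-1 : ℝ) * (α - i) := (Finset.prod_mul_distrib).symm
    _ = ∏ i ∈ Finset.range k, ((i : ℝ) - α) := Finset.prod_congr rfl (fun i _ => by ring)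

lemma glWeight_nonpos {α : ℝ} (hα : α ∈ Set.Ioo (0 : ℝ) 1) {k : ℕ} (hk : 1 ≤ k) :
    glWeight α k ≤ 0 := by
  obtain ⟨h0, h1⟩ := hα
  unfold glWeight
  rw [div_eq_mul_inv, glWeight_sign_prod]
  apply mul_nonpos_of_nonpos_of_nonneg
  · obtain ⟨j, rfl⟩ : ∃ j, k = j + 1 := ⟨k - 1, (Nat.succ_pred_eq_of_pos hk).symm⟩
    rw [Finset.prod_range_succ']
    apply mul_nonpos_of_nonneg_of_nonpos
    · apply Finset.prod_nonneg
      intro i _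
      have h0i : (0 : ℝ) ≤ (i : ℝ) := Nat.cast_nonneg i
      push_cast
      linarith
    · simp; linarith
  · positivity

lemma glWeight_sum (α : ℝ) (m : ℕ) :
    ∑ k ∈ Finset.range (m + 1), glWeight α k =
      (∏ i ∈ Finset.range m, ((i : ℝ) + 1 - α)) / (Nat.factorial m) := by
  induction m with
  | zero => simp [glWeight]
  | succ m ih =>
    rw [Finset.sum_range_succ, ih]
    have hprod : glWeight α (m + 1) =
        (-α) * (∏ i ∈ Finset.range m, ((i : ℝ) + 1 - α)) / (Nat.factorial (m + 1)) := by
      unfold glWeight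
      congr 1
      rw [Finset.prod_range_succ']
      have hpow : ((-1 : ℝ)) ^ (m + 1) = (-1) * (-1) ^ m := by ring
      rw [hpow]
      push_cast
      have h2 : (-1 : ℝ) ^ m * ∏ i ∈ Finset.range m, (α - ((i : ℝ) + 1)) =
          ∏ i ∈ Finset.range m, ((i : ℝ) + 1 - α) := by
        calc (-1 : ℝ) ^ m * ∏ i ∈ Finset.range m, (α - ((i : ℝ) + 1))
            = (∏ _i ∈ Finset.range m, (-1 : ℝ)) * ∏ i ∈ Finset.range m, (α - ((i : ℝ) + 1)) := by
              rw [Finset.prod_const, Finset.card_range]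
          _ = ∏ i ∈ Finset.range m, (-1 : ℝ) * (α - ((i : ℝ) + 1)) := (Finset.prod_mul_distrib).symm
          _ = ∏ i ∈ Finset.range m, ((i : ℝ) + 1 - α) := Finset.prod_congr rfl (fun i _ => by ring)
      rw [← h2]
      ring
    rw [hprod, Finset.prod_range_succ]
    have hf : (Nat.factorial (m + 1) : ℝ) = (m + 1) * (Nat.factorial m : ℝ) := by
      push_cast [Nat.factorial_succ]; ring
    have hm : (Nat.factorial m : ℝ) ≠ 0 := by positivity
    have hm1 : ((m : ℝ) + 1) ≠ 0 := by positivity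
    rw [hf]
    field_simp
    ring

lemma glWeight_sum_nonneg {α : ℝ} (hα : α ∈ Set.Ioo (0 : ℝ) 1) (m : ℕ) :
    0 ≤ ∑ k ∈ Finset.range (m + 1), glWeight α k := by
  rw [glWeight_sum]
  apply div_nonneg
  · apply Finset.prod_nonneg
    intro i _
    have : (0 : ℝ) ≤ i := Nat.cast_nonneg i
    linarith [hα.2]
  · positivity

theorem discrete_product_rule_inequality {H : Type*} [NormedAddCommGroup H]
    [InnerProductSpace ℝ H] (α : ℝ) (hα : α ∈ Set.Ioo (0 : ℝ) 1)
    (τ : ℝ) (hτ : 0 < τ) (N : ℕ) (u : ℕ → H) (n : ℕ) (hn : 1 ≤ n) (hnN : n ≤ N) :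
    (inner (𝕜 := ℝ)
        (τ ^ (-α) • ∑ j ∈ Finset.Icc 1 n, glWeight α (n - j) • (u j - u 0)) (u n) : ℝ) ≥
      (1 / 2) * (τ ^ (-α) * ∑ j ∈ Finset.Icc 1 n, glWeight α (n - j) * (‖u j‖ ^ 2 - ‖u 0‖ ^ 2)) := by
  have hτα : (0 : ℝ) < τ ^ (-α) := Real.rpow_pos_of_pos hτ _
  rw [real_inner_smul_left, sum_inner]
  simp_rw [real_inner_smul_left]
  -- reduce to the core inequality
  have core : ∑ j ∈ Finset.Icc 1 n, glWeight α (n - j) * (inner ℝ (u j - u 0) (u n) : ℝ) ≥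
      (1 / 2) * ∑ j ∈ Finset.Icc 1 n, glWeight α (n - j) * (‖u j‖ ^ 2 - ‖u 0‖ ^ 2) := by
    have expand : ∀ a b : H,
        glWeight α (n - 0) = glWeight α (n - 0) → True := fun _ _ _ => trivial
    -- termwise identity
    have hterm : ∀ j ∈ Finset.Icc 1 n,
        glWeight α (n - j) * (inner ℝ (u j - u 0) (u n) : ℝ)
          - (1 / 2) * (glWeight α (n - j) * (‖u j‖ ^ 2 - ‖u 0‖ ^ 2))
        = glWeight α (n - j) * (‖u n - u 0‖ ^ 2 / 2)
          + glWeight α (n - j) * (-(‖u j - u n‖ ^ 2) / 2) := by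
      intro j _
      have h1 : ‖u n - u 0‖ ^ 2 = ‖u n‖ ^ 2 - 2 * (inner ℝ (u n) (u 0) : ℝ) + ‖u 0‖ ^ 2 := by
        rw [norm_sub_sq_real]
      have h2 : ‖u j - u n‖ ^ 2 = ‖u j‖ ^ 2 - 2 * (inner ℝ (u j) (u n) : ℝ) + ‖u n‖ ^ 2 := by
        rw [norm_sub_sq_real]
      have h3 : (inner ℝ (u j - u 0) (u n) : ℝ) =
          (inner ℝ (u j) (u n) : ℝ) - (inner ℝ (u 0) (u n) : ℝ) := inner_sub_left _ _ _
      have h4 : (inner ℝ (u 0) (u n) : ℝ) = (inner ℝ (u n) (u 0) : ℝ) := real_inner_comm _ _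
      rw [h1, h2, h3, h4]
      ring
    have hsplit : ∑ j ∈ Finset.Icc 1 n, glWeight α (n - j) * (inner ℝ (u j - u 0) (u n) : ℝ)
          - (1 / 2) * ∑ j ∈ Finset.Icc 1 n, glWeight α (n - j) * (‖u j‖ ^ 2 - ‖u 0‖ ^ 2)
        = (∑ j ∈ Finset.Icc 1 n, glWeight α (n - j)) * (‖u n - u 0‖ ^ 2 / 2)
          + ∑ j ∈ Finset.Icc 1 n, glWeight α (n - j) * (-(‖u j - u n‖ ^ 2) / 2) := by
      rw [Finset.mul_sum, ← Finset.sum_sub_distrib, Finset.sum_mul, ← Finset.sum_add_distrib]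
      exact Finset.sum_congr rfl hterm
    -- W ≥ 0
    have hW : 0 ≤ ∑ j ∈ Finset.Icc 1 n, glWeight α (n - j) := by
      have hre : ∑ j ∈ Finset.Icc 1 n, glWeight α (n - j)
          = ∑ k ∈ Finset.range n, glWeight α k := by
        refine Finset.sum_nbij' (fun j => n - j) (fun k => n - k) ?_ ?_ ?_ ?_ ?_
        · intro a ha; simp only [Finset.mem_Icc] at ha; simp only [Finset.mem_range]; omega
        · intro a ha; simp only [Finset.mem_range] at ha; simp only [Finset.mem_Icc]; omega
        · intro a ha; simp only [Finset.mem_Icc] at ha; omega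
        · intro a ha; simp only [Finset.mem_range] at ha; omega
        · intro a _; rfl
      rw [hre]
      obtain ⟨m, rfl⟩ : ∃ m, n = m + 1 := ⟨n - 1, by omega⟩
      exact glWeight_sum_nonneg hα m
    have hsum2 : 0 ≤ ∑ j ∈ Finset.Icc 1 n, glWeight α (n - j) * (-(‖u j - u n‖ ^ 2) / 2) := by
      apply Finset.sum_nonneg
      intro j hj
      rw [Finset.mem_Icc] at hj
      rcases eq_or_lt_of_le hj.2 with heq | hlt
      · subst heq
        simp
      · have h1 : 1 ≤ n - j := by omega
        nlinarith [glWeight_nonpos hα h1, sq_nonneg ‖u j - u n‖]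
    have h1 : 0 ≤ (∑ j ∈ Finset.Icc 1 n, glWeight α (n - j)) * (‖u n - u 0‖ ^ 2 / 2) := by
      apply mul_nonneg hW; positivity
    linarith [hsplit, h1, hsum2]
  nlinarith [core, hτα,
    mul_le_mul_of_nonneg_left core.le hτα.le]
end

section
/- Let f : [0,T] → ℝ be continuous on [0,T] and continuously differentiable on (0,T], with f' integrable so that the Caputo derivative ∂_t^α f(t) = (1/Γ(1-α)) ∫_0^t (t-s)^{-α} f'(s) ds is well-defined for α ∈ (0,1). If f attains its minimum over [0,T] at a point t_0 ∈ (0,T], then ∂_t^α f(t_0) ≤ 0. -/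
open Real MeasureTheory Set Filter Topology

theorem caputo_extremum_principle (α T : ℝ) (hα : α ∈ Set.Ioo (0 : ℝ) 1) (hT : 0 < T)
    (f : ℝ → ℝ) (hf : ContinuousOn f (Set.Icc 0 T))
    (hdiff : ∀ t ∈ Set.Ioc (0 : ℝ) T, DifferentiableAt ℝ f t)
    (t₀ : ℝ) (ht₀ : t₀ ∈ Set.Ioc (0 : ℝ) T)
    (hint : IntervalIntegrable (fun s => (t₀ - s) ^ (-α) * deriv f s)
      MeasureTheory.volume 0 t₀)
    (hmin : ∀ t ∈ Set.Icc (0 : ℝ) T, f t₀ ≤ f t) :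
    (1 / Real.Gamma (1 - α)) * ∫ s in (0 : ℝ)..t₀, (t₀ - s) ^ (-α) * deriv f s ≤ 0 := by
  obtain ⟨hα0, hα1⟩ := hα
  obtain ⟨ht0, ht0T⟩ := ht₀
  have hΓ : 0 < Real.Gamma (1 - α) := Real.Gamma_pos_of_pos (by linarith)
  set φ : ℝ → ℝ := fun s => (t₀ - s) ^ (-α) * deriv f s with hφ
  set H : ℝ → ℝ := fun s => (t₀ - s) ^ (-α) * (f s - f t₀) with hH
  set F : ℝ → ℝ := fun x => ∫ s in (0:ℝ)..x, φ s with hF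
  -- key inequality on [0, x] for x < t₀
  have key : ∀ x ∈ Ioo (0:ℝ) t₀, F x ≤ H x := by
    intro x hx
    obtain ⟨hx0, hxt⟩ := hx
    set G : ℝ → ℝ := fun s => α * (t₀ - s) ^ (-α - 1) * (f s - f t₀) + φ s with hG
    have hxT : x ≤ T := le_of_lt (lt_of_lt_of_le hxt ht0T)
    have hpos : ∀ s ∈ Icc (0:ℝ) x, 0 < t₀ - s := fun s hs => by
      have := hs.2; linarith
    -- continuity of H on [0,x]
    have hfc : ContinuousOn f (Icc 0 x) := hf.mono (Icc_subset_Icc le_rfl hxT)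
    have hcontpow : ContinuousOn (fun s => (t₀ - s) ^ (-α)) (Icc 0 x) :=
      (continuousOn_const.sub continuousOn_id).rpow_const
        (fun s hs => Or.inl (ne_of_gt (hpos s hs)))
    have hHcont : ContinuousOn H (Icc 0 x) :=
      hcontpow.mul (hfc.sub continuousOn_const)
    -- integrability of G on [0,x]
    have hφint : IntervalIntegrable φ volume 0 x :=
      hint.mono_set (by rw [uIcc_of_le hx0.le, uIcc_of_le (le_of_lt (lt_trans hx0 hxt))]
                        exact Icc_subset_Icc le_rfl hxt.le)
    have hAcont : ContinuousOn (fun s => α * (t₀ - s) ^ (-α - 1) * (f s - f t₀)) (Icc 0 x) := by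
      refine ContinuousOn.mul (continuousOn_const.mul ?_) (hfc.sub continuousOn_const)
      exact (continuousOn_const.sub continuousOn_id).rpow_const
        (fun s hs => Or.inl (ne_of_gt (hpos s hs)))
    have hAint : IntervalIntegrable (fun s => α * (t₀ - s) ^ (-α - 1) * (f s - f t₀))
        volume 0 x := by
      apply ContinuousOn.intervalIntegrable
      rwa [uIcc_of_le hx0.le]
    have hGint : IntervalIntegrable G volume 0 x := hAint.add hφint
    -- derivative of H on (0,x)
    have hderiv : ∀ s ∈ Ioo (0:ℝ) x, HasDerivAt H (G s) s := by
      intro s hs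
      have hps : 0 < t₀ - s := by have := hs.2; linarith
      have h1 : HasDerivAt (fun y => t₀ - y) (0 - 1) s :=
        (hasDerivAt_const s t₀).sub (hasDerivAt_id s)
      have h2 : HasDerivAt (fun y => (t₀ - y) ^ (-α))
          ((0 - 1) * (-α) * (t₀ - s) ^ (-α - 1)) s :=
        h1.rpow_const (Or.inl (ne_of_gt hps))
      have h3 : HasDerivAt (fun y => f y - f t₀) (deriv f s) s :=
        ((hdiff s ⟨hs.1, le_trans hs.2.le hxT⟩).hasDerivAt).sub_const _
      have : HasDerivAt (fun y => (t₀ - y) ^ (-α) * (f y - f t₀))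
          ((0 - 1) * (-α) * (t₀ - s) ^ (-α - 1) * (f s - f t₀) + (t₀ - s) ^ (-α) * deriv f s) s :=
        h2.mul h3
      convert this using 1
      show α * (t₀ - s) ^ (-α - 1) * (f s - f t₀) + (t₀ - s) ^ (-α) * deriv f s = _
      ring
    have hFTC : ∫ s in (0:ℝ)..x, G s = H x - H 0 :=
      intervalIntegral.integral_eq_sub_of_hasDeriv_right_of_le hx0.le hHcont
        (fun s hs => (hderiv s hs).hasDerivWithinAt) hGint
    have hmono : F x ≤ ∫ s in (0:ℝ)..x, G s := by
      apply intervalIntegral.integral_mono_on hx0.le hφint hGint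
      intro s hs
      have hps := hpos s hs
      have hfs : 0 ≤ f s - f t₀ :=
        sub_nonneg.2 (hmin s ⟨hs.1, le_trans hs.2 hxT⟩)
      have : 0 ≤ α * (t₀ - s) ^ (-α - 1) * (f s - f t₀) :=
        mul_nonneg (mul_nonneg hα0.le (Real.rpow_nonneg hps.le _)) hfs
      simp only [hG]
      linarith
    have hH0 : 0 ≤ H 0 := by
      simp only [hH, sub_zero]
      exact mul_nonneg (Real.rpow_nonneg (by linarith) _)
        (sub_nonneg.2 (hmin 0 ⟨le_rfl, hT.le⟩))
    linarith [hFTC ▸ hmono]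
  -- limits as x → t₀⁻
  have hFlim : Tendsto F (𝓝[<] t₀) (𝓝 (F t₀)) := by
    have hc : ContinuousWithinAt F (Icc 0 t₀) t₀ := by
      apply intervalIntegral.continuousWithinAt_primitive (measure_singleton t₀)
      rw [min_self, max_comm, max_eq_left ht0.le]
      exact hint
    have hle : 𝓝[<] t₀ ≤ 𝓝[Icc 0 t₀] t₀ := by
      apply nhdsWithin_le_iff.2
      apply Filter.mem_of_superset
        (inter_mem (mem_nhdsWithin_of_mem_nhds (Ici_mem_nhds ht0)) self_mem_nhdsWithin)
      rintro y ⟨hy1, hy2⟩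
      exact ⟨hy1, le_of_lt hy2⟩
    exact hc.tendsto.mono_left hle
  have hHlim : Tendsto H (𝓝[<] t₀) (𝓝 0) := by
    have hslope : Tendsto (fun x => (f x - f t₀) / (x - t₀)) (𝓝[<] t₀) (𝓝 (deriv f t₀)) := by
      have hd := (hdiff t₀ ⟨ht0, ht0T⟩).hasDerivAt
      rw [hasDerivAt_iff_tendsto_slope] at hd
      have : Tendsto (slope f t₀) (𝓝[<] t₀) (𝓝 (deriv f t₀)) :=
        hd.mono_left (nhdsWithin_mono _ (fun y hy => ne_of_lt hy))
      refine this.congr (fun y => ?_)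
      rw [slope_def_field]
    have hpow : Tendsto (fun x => (t₀ - x) ^ (1 - α)) (𝓝[<] t₀) (𝓝 0) := by
      have h1 : Tendsto (fun x : ℝ => t₀ - x) (𝓝[<] t₀) (𝓝 0) := by
        have : Tendsto (fun x : ℝ => t₀ - x) (𝓝 t₀) (𝓝 (t₀ - t₀)) :=
          (continuous_const.sub continuous_id).tendsto t₀
        rw [sub_self] at this
        exact this.mono_left nhdsWithin_le_nhds
      have h2 : ContinuousAt (fun y : ℝ => y ^ (1 - α)) 0 :=
        Real.continuousAt_rpow_const 0 (1 - α) (Or.inr (by linarith))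
      have := h2.tendsto.comp h1
      rwa [Real.zero_rpow (by linarith : (1:ℝ) - α ≠ 0)] at this
    have hcomb : Tendsto (fun x => -((t₀ - x) ^ (1 - α)) * ((f x - f t₀) / (x - t₀)))
        (𝓝[<] t₀) (𝓝 (-0 * deriv f t₀)) := hpow.neg.mul hslope
    rw [neg_zero, zero_mul] at hcomb
    refine hcomb.congr' ?_
    filter_upwards [self_mem_nhdsWithin] with x hx
    have hps : 0 < t₀ - x := sub_pos.2 hx
    have hne : x - t₀ ≠ 0 := by intro h; linarith [hps, sub_eq_zero.1 h]
    have hrw : (t₀ - x) ^ ((1:ℝ) - α) = (t₀ - x) ^ (-α) * (t₀ - x) := by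
      rw [show (1:ℝ) - α = -α + 1 by ring, Real.rpow_add hps, Real.rpow_one]
    simp only [hH]
    rw [hrw]
    field_simp
    ring
  have hevle : ∀ᶠ x in 𝓝[<] t₀, F x ≤ H x := by
    filter_upwards [Ioo_mem_nhdsLT_of_mem (Set.mem_Ioc.2 ⟨ht0, le_rfl⟩)] with x hx
    exact key x hx
  have hI : F t₀ ≤ 0 := le_of_tendsto_of_tendsto hFlim hHlim hevle
  have : (0:ℝ) ≤ 1 / Real.Gamma (1 - α) := by positivity
  exact mul_nonpos_of_nonneg_of_nonpos this hI
end
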